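/- Let ω ≥ 2 and let a_0, a_1, …, a_ω be nonnegative integers. Let H be the (ω; a_0, …, a_ω)-clique-star and set α = ω + Σ_{i=0}^{ω} a_i (its independence number). Let K be a CRG all of whose vertices are black and all of whose edges are white or gray. Suppose that either (i) some vertex of K has at least α gray neighbors, or (ii) there exist distinct vertices v_1, …, v_ω of K, pairwise joined by gray edges, such that for i = 1, …, ω−1 the vertex v_i has at least α−1 gray neighbors, and v_ω has at least ⌊(α−ω)/ω⌋ + ω − 1 gray neighbors. Then H embeds in K. -/

import Mathlib

/-- Colors for edges of a colored regularity graph. -/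
inductive EColor : Type
  | white
  | gray
  | black
deriving DecidableEq

/-- A colored regularity graph (CRG) on a finite vertex type `V`: each vertex is
white or black (`vWhite v = true` means white), and each pair of distinct vertices
gets a symmetric edge color (white, gray or black). -/
structure CRG (V : Type) [Fintype V] where
  vWhite : V → Bool
  ecolor : V → V → EColor
  ecolor_symm : ∀ u v, ecolor u v = ecolor v u

namespace CRG

variable {V : Type} [Fintype V] [DecidableEq V]

/-- The matrix `M_K(p)`. -/
noncomputable def M (K : CRG V) (p : ℝ) (u v : V) : ℝ :=
  if u = v then (if K.vWhite u then p else 1 - p)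
  else
    match K.ecolor u v with
    | EColor.white => p
    | EColor.black => 1 - p
    | EColor.gray => 0

/-- The function `g_K(p)`: the minimum of `xᵀ M_K(p) x` over nonnegative weight
vectors summing to `1`. -/
noncomputable def g (K : CRG V) (p : ℝ) : ℝ :=
  sInf {r : ℝ | ∃ x : V → ℝ, (∀ v, 0 ≤ x v) ∧ (∑ v, x v) = 1 ∧
    r = ∑ u, ∑ v, x u * K.M p u v * x v}

/-- The sub-CRG induced on a subset `s` of the vertices. -/
def sub (K : CRG V) (s : Finset V) : CRG {v // v ∈ s} where
  vWhite := fun v => K.vWhite v.1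
  ecolor := fun u v => K.ecolor u.1 v.1
  ecolor_symm := fun u v => K.ecolor_symm u.1 v.1

/-- `K` is `p`-core if `g_K(p) < g_{K'}(p)` for every proper (nonempty) sub-CRG `K'`. -/
def IsPCore (K : CRG V) (p : ℝ) : Prop :=
  ∀ s : Finset V, s.Nonempty → s ≠ Finset.univ → K.g p < (K.sub s).g p

/-- `x` is an optimal weight vector for `K` at `p`. -/
def IsOptWeight (K : CRG V) (p : ℝ) (x : V → ℝ) : Prop :=
  (∀ v, 0 ≤ x v) ∧ (∑ v, x v) = 1 ∧
    (∑ u, ∑ v, x u * K.M p u v * x v) = K.g p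

/-- The gray degree `d_G(v)`: total weight of gray neighbors of `v`. -/
noncomputable def dG (K : CRG V) (x : V → ℝ) (v : V) : ℝ :=
  ∑ w ∈ Finset.univ.filter fun w => w ≠ v ∧ K.ecolor v w = EColor.gray, x w

/-- The white degree `d_W(v)`: total weight of white neighbors of `v`, including `v`
itself if `v` is white. -/
noncomputable def dW (K : CRG V) (x : V → ℝ) (v : V) : ℝ :=
  (∑ w ∈ Finset.univ.filter fun w => w ≠ v ∧ K.ecolor v w = EColor.white, x w) +
    (if K.vWhite v then x v else 0)

/-- The black degree `d_B(v)`: total weight of black neighbors of `v`, including `v`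
itself if `v` is black. -/
noncomputable def dB (K : CRG V) (x : V → ℝ) (v : V) : ℝ :=
  (∑ w ∈ Finset.univ.filter fun w => w ≠ v ∧ K.ecolor v w = EColor.black, x w) +
    (if K.vWhite v then 0 else x v)

/-- The number of gray neighbors of `v`. -/
def grayDeg (K : CRG V) (v : V) : ℕ :=
  (Finset.univ.filter fun w => w ≠ v ∧ K.ecolor v w = EColor.gray).card

end CRG

/-- A graph `H` embeds in a CRG `K`, written `H ↦ K`. -/
def EmbedsIn {α : Type*} {V : Type} [Fintype V] (H : SimpleGraph α) (K : CRG V) : Prop :=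
  ∃ φ : α → V,
    (∀ a b : α, H.Adj a b →
      (φ a = φ b ∧ K.vWhite (φ a) = false) ∨
      (φ a ≠ φ b ∧ (K.ecolor (φ a) (φ b) = EColor.black ∨ K.ecolor (φ a) (φ b) = EColor.gray))) ∧
    (∀ a b : α, a ≠ b → ¬H.Adj a b →
      (φ a = φ b ∧ K.vWhite (φ a) = true) ∨
      (φ a ≠ φ b ∧ (K.ecolor (φ a) (φ b) = EColor.white ∨ K.ecolor (φ a) (φ b) = EColor.gray)))

/-- `H` is the `(ω; a 0, a 1, …, a ω)`-clique-star: its vertices split into a clique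
`W = {w 1, …, w ω}` and an independent set (the complement of `W`), each `w i` has
exactly `a i + 1` neighbors outside `W` and these neighborhoods are pairwise disjoint,
and exactly `a 0` vertices outside `W` are isolated. -/
def IsCliqueStar {β : Type*} (H : SimpleGraph β) (ω : ℕ) (a : Fin (ω + 1) → ℕ) : Prop :=
  ∃ w : Fin ω → β, Function.Injective w ∧
    (∀ i j : Fin ω, i ≠ j → H.Adj (w i) (w j)) ∧
    (∀ u v : β, u ∉ Set.range w → v ∉ Set.range w → ¬H.Adj u v) ∧
    (∀ i j : Fin ω, i ≠ j → ∀ v : β, v ∉ Set.range w →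
      ¬(H.Adj (w i) v ∧ H.Adj (w j) v)) ∧
    (∀ i : Fin ω, {v : β | v ∉ Set.range w ∧ H.Adj (w i) v}.ncard = a i.succ + 1) ∧
    {v : β | v ∉ Set.range w ∧ ∀ u : β, ¬H.Adj v u}.ncard = a 0

/-!
Since every vertex of `K` is black and no edge is black, a map `V(H) → V(K)` is an embedding as
soon as adjacent vertices go to equal or gray-joined vertices and distinct non-adjacent ones to
distinct vertices. In case (i) the whole clique goes to `v` and the `α` independent vertices to
distinct gray neighbours of `v`. In case (ii) `w_i` goes to `v_i` together with one of its own
neighbours; the remaining independent vertices go to distinct vertices outside `{v_1, …, v_ω}`,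
the neighbours of `w_i` to gray neighbours of `v_i`. Letting `v_ω` host the `w_i` with the
smallest `a_i`, Hall's condition holds: the neighbours of that `w_i` need only
`a_i ≤ ⌊(α - ω)/ω⌋` targets, and every other vertex has at least `α - ω` of them.
-/

open Finset in
theorem exists_injective_mem_of_card_le {ι α : Type*} [Finite ι] [DecidableEq α]
    (t : ι → Finset α) (s : Set ι) (T : Finset α) (hT : ∀ i ∈ s, T ⊆ t i)
    (hs : s.ncard ≤ #T) (ht : ∀ i ∉ s, Nat.card ι ≤ #(t i)) :
    ∃ f : ι → α, Function.Injective f ∧ ∀ i, f i ∈ t i := by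
  refine (all_card_le_biUnion_card_iff_exists_injective t).mp fun X => ?_
  by_cases hX : ∃ i ∈ X, i ∉ s
  · obtain ⟨i, hiX, his⟩ := hX
    calc #X = (X : Set ι).ncard := (Set.ncard_coe_finset X).symm
      _ ≤ Nat.card ι := Set.ncard_le_card _
      _ ≤ #(t i) := ht i his
      _ ≤ #(X.biUnion t) := card_le_card (subset_biUnion_of_mem t hiX)
  · push Not at hX
    obtain rfl | ⟨i, hiX⟩ := X.eq_empty_or_nonempty
    · simp
    calc #X = (X : Set ι).ncard := (Set.ncard_coe_finset X).symm
      _ ≤ s.ncard := Set.ncard_le_ncard hX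
      _ ≤ #T := hs
      _ ≤ #(X.biUnion t) := card_le_card ((hT i (hX i hiX)).trans (subset_biUnion_of_mem t hiX))

theorem exists_injective_mem_of_forall_card_le {ι α : Type*} [Finite ι] [DecidableEq α]
    (t : ι → Finset α) (ht : ∀ i, Nat.card ι ≤ (t i).card) :
    ∃ f : ι → α, Function.Injective f ∧ ∀ i, f i ∈ t i :=
  exists_injective_mem_of_card_le t ∅ ∅ (by simp) (by simp) fun i _ => ht i

theorem exists_card_mul_le_sum {ι : Type*} [Fintype ι] [Nonempty ι] (f : ι → ℕ) :
    ∃ i, Fintype.card ι * f i ≤ ∑ j, f j := by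
  obtain ⟨i, -, hi⟩ := Finset.exists_min_image Finset.univ f Finset.univ_nonempty
  exact ⟨i, by
    simpa using Finset.card_nsmul_le_sum Finset.univ f (f i) fun j _ => hi j (Finset.mem_univ j)⟩

theorem exists_eq_on_range_of_injective {ι β γ : Type*} {w n : ι → β}
    (hw : Function.Injective w) (hn : Function.Injective n) (hwn : ∀ i, n i ∉ Set.range w)
    (u : ι → γ) (g : β → γ) :
    ∃ φ : β → γ, (∀ i, φ (w i) = u i) ∧ (∀ i, φ (n i) = u i) ∧
      ∀ b ∈ (Set.range w)ᶜ \ Set.range n, φ b = g b :=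
  ⟨Function.extend w u (Function.extend n u g), hw.extend_apply _ _,
    fun i => by rw [Function.extend_apply' _ _ _ (hwn i), hn.extend_apply],
    fun b ⟨hbw, hbn⟩ => by
      rw [Function.extend_apply' _ _ _ hbw, Function.extend_apply' _ _ _ hbn]⟩

namespace CRG

variable {V : Type} [Fintype V] [DecidableEq V]

def grayNbhd (K : CRG V) (v : V) : Finset V :=
  Finset.univ.filter fun w => w ≠ v ∧ K.ecolor v w = EColor.gray

theorem mem_grayNbhd {K : CRG V} {v w : V} :
    w ∈ K.grayNbhd v ↔ w ≠ v ∧ K.ecolor v w = EColor.gray := by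
  simp [grayNbhd]

theorem grayDeg_le_card_grayNbhd_sdiff (K : CRG V) {v : V} {S : Finset V} (hv : v ∈ S) :
    K.grayDeg v ≤ (K.grayNbhd v \ S).card + (S.card - 1) := by
  have hsub : K.grayNbhd v ⊆ (K.grayNbhd v \ S) ∪ S.erase v := by
    intro z hz
    by_cases hzS : z ∈ S
    · exact Finset.mem_union_right _ (Finset.mem_erase.2 ⟨(mem_grayNbhd.1 hz).1, hzS⟩)
    · exact Finset.mem_union_left _ (Finset.mem_sdiff.2 ⟨hz, hzS⟩)
  calc K.grayDeg v ≤ ((K.grayNbhd v \ S) ∪ S.erase v).card := Finset.card_le_card hsub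
    _ ≤ (K.grayNbhd v \ S).card + (S.erase v).card := Finset.card_union_le _ _
    _ = (K.grayNbhd v \ S).card + (S.card - 1) := by rw [Finset.card_erase_of_mem hv]

end CRG

theorem embedsIn_of_adj_gray_of_not_adj_ne {β : Type*} {V : Type} [Fintype V]
    {H : SimpleGraph β} {K : CRG V} (hblack : ∀ v, K.vWhite v = false)
    (hedges : ∀ u v, u ≠ v → K.ecolor u v ≠ EColor.black) (φ : β → V)
    (hadj : ∀ x y, H.Adj x y → φ x ≠ φ y → K.ecolor (φ x) (φ y) = EColor.gray)
    (hnonadj : ∀ x y, x ≠ y → φ x = φ y → H.Adj x y) : EmbedsIn H K := by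
  refine ⟨φ, fun x y hxy => ?_, fun x y hne hxy => ?_⟩
  · by_cases h : φ x = φ y
    · exact Or.inl ⟨h, hblack _⟩
    · exact Or.inr ⟨h, Or.inr (hadj x y hxy h)⟩
  · have h : φ x ≠ φ y := fun h => hxy (hnonadj x y hne h)
    refine Or.inr ⟨h, ?_⟩
    cases hc : K.ecolor (φ x) (φ y)
    · exact Or.inl rfl
    · exact Or.inr rfl
    · exact absurd hc (hedges _ _ h)

structure IsCliqueStarOn {β : Type*} (H : SimpleGraph β) (ω : ℕ) (a : Fin (ω + 1) → ℕ)
    (w : Fin ω → β) : Prop where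
  injective : Function.Injective w
  adj : ∀ i j : Fin ω, i ≠ j → H.Adj (w i) (w j)
  not_adj : ∀ u v : β, u ∉ Set.range w → v ∉ Set.range w → ¬H.Adj u v
  not_adj_and_adj : ∀ i j : Fin ω, i ≠ j → ∀ v : β, v ∉ Set.range w →
    ¬(H.Adj (w i) v ∧ H.Adj (w j) v)
  ncard_nbhd : ∀ i : Fin ω, {v : β | v ∉ Set.range w ∧ H.Adj (w i) v}.ncard = a i.succ + 1
  ncard_isolated : {v : β | v ∉ Set.range w ∧ ∀ u : β, ¬H.Adj v u}.ncard = a 0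

theorem IsCliqueStar.exists_isCliqueStarOn {β : Type*} {H : SimpleGraph β} {ω : ℕ}
    {a : Fin (ω + 1) → ℕ} (hH : IsCliqueStar H ω a) : ∃ w, IsCliqueStarOn H ω a w :=
  let ⟨w, h₁, h₂, h₃, h₄, h₅, h₆⟩ := hH
  ⟨w, h₁, h₂, h₃, h₄, h₅, h₆⟩

namespace IsCliqueStarOn

variable {β : Type*} {H : SimpleGraph β} {ω : ℕ} {a : Fin (ω + 1) → ℕ}
  {w : Fin ω → β}

theorem eq_of_adj_of_adj (hw : IsCliqueStarOn H ω a w) {v : β} (hv : v ∉ Set.range w)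
    {i j : Fin ω} (hi : H.Adj (w i) v) (hj : H.Adj (w j) v) : i = j := by
  by_contra hij
  exact hw.not_adj_and_adj i j hij v hv ⟨hi, hj⟩

theorem exists_adj (hw : IsCliqueStarOn H ω a w) (i : Fin ω) :
    ∃ v, v ∉ Set.range w ∧ H.Adj (w i) v :=
  Set.nonempty_of_ncard_ne_zero (s := {v | v ∉ Set.range w ∧ H.Adj (w i) v})
    (by rw [hw.ncard_nbhd i]; omega)

theorem ncard_compl_range_le [Finite β] (hw : IsCliqueStarOn H ω a w) :
    (Set.range w)ᶜ.ncard ≤ ω + ∑ i, a i := by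
  have hsub : (Set.range w)ᶜ ⊆ (⋃ i, {v | v ∉ Set.range w ∧ H.Adj (w i) v}) ∪
      {v | v ∉ Set.range w ∧ ∀ u, ¬H.Adj v u} := by
    intro v hv
    by_cases hiso : ∀ u, ¬H.Adj v u
    · exact Or.inr ⟨hv, hiso⟩
    push Not at hiso
    obtain ⟨u, hvu⟩ := hiso
    obtain ⟨i, rfl⟩ : u ∈ Set.range w := by
      by_contra hu
      exact hw.not_adj v u hv hu hvu
    exact Or.inl (Set.mem_iUnion.2 ⟨i, hv, hvu.symm⟩)
  calc (Set.range w)ᶜ.ncard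
      ≤ (⋃ i, {v | v ∉ Set.range w ∧ H.Adj (w i) v}).ncard +
          {v | v ∉ Set.range w ∧ ∀ u, ¬H.Adj v u}.ncard :=
        (Set.ncard_le_ncard hsub).trans (Set.ncard_union_le _ _)
    _ ≤ ∑ i : Fin ω, (a i.succ + 1) + a 0 := by
        rw [hw.ncard_isolated, ← funext hw.ncard_nbhd]
        exact Nat.add_le_add_right (Set.ncard_iUnion_le_of_fintype _) _
    _ = ω + ∑ i, a i := by
        rw [Fin.sum_univ_succ, Finset.sum_add_distrib]
        simp only [Finset.sum_const, Finset.card_univ, Fintype.card_fin, smul_eq_mul, mul_one]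
        omega

theorem injective_of_adj (hw : IsCliqueStarOn H ω a w) {nbr : Fin ω → β}
    (hnbr : ∀ i, nbr i ∉ Set.range w ∧ H.Adj (w i) (nbr i)) : Function.Injective nbr :=
  fun i j h => hw.eq_of_adj_of_adj (hnbr j).1 (h ▸ (hnbr i).2) (hnbr j).2

theorem ncard_compl_range_sdiff_le [Finite β] (hw : IsCliqueStarOn H ω a w) {nbr : Fin ω → β}
    (hnbr : ∀ i, nbr i ∉ Set.range w ∧ H.Adj (w i) (nbr i)) :
    ((Set.range w)ᶜ \ Set.range nbr).ncard ≤ ∑ i, a i := by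
  have hsub : Set.range nbr ⊆ (Set.range w)ᶜ := by
    rintro _ ⟨i, rfl⟩
    exact (hnbr i).1
  rw [Set.ncard_sdiff hsub, Set.ncard_range_of_injective (hw.injective_of_adj hnbr), Nat.card_fin]
  have := hw.ncard_compl_range_le
  omega

theorem ncard_inter_adj_le [Finite β] (hw : IsCliqueStarOn H ω a w) {S : Set β}
    (hS : S ⊆ (Set.range w)ᶜ) {i : Fin ω} {v : β} (hv : v ∉ Set.range w ∧ H.Adj (w i) v)
    (hvS : v ∉ S) : (S ∩ {b | H.Adj (w i) b}).ncard ≤ a i.succ := by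
  calc (S ∩ {b | H.Adj (w i) b}).ncard
      ≤ ({b | b ∉ Set.range w ∧ H.Adj (w i) b} \ {v}).ncard :=
        Set.ncard_le_ncard fun b ⟨hbS, hb⟩ =>
          ⟨⟨hS hbS, hb⟩, fun h => hvS (Set.mem_singleton_iff.1 h ▸ hbS)⟩
    _ = a i.succ := by
        rw [Set.ncard_sdiff_singleton_of_mem (s := {b | b ∉ Set.range w ∧ H.Adj (w i) b}) hv,
          hw.ncard_nbhd, Nat.add_sub_cancel]

theorem exists_ne_forall_adj_eq (hw : IsCliqueStarOn H ω a w) (hω : 2 ≤ ω) {b : β}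
    (hb : b ∉ Set.range w) {i₀ : Fin ω} (hi₀ : ¬H.Adj (w i₀) b) :
    ∃ j ≠ i₀, ∀ i, H.Adj (w i) b → i = j := by
  by_cases hadj : ∃ j, H.Adj (w j) b
  · obtain ⟨j, hj⟩ := hadj
    exact ⟨j, fun h => hi₀ (h ▸ hj), fun i hi => hw.eq_of_adj_of_adj hb hi hj⟩
  · have := Fin.nontrivial_iff_two_le.2 hω
    obtain ⟨j, hj⟩ := exists_ne i₀
    exact ⟨j, hj, fun i hi => absurd ⟨i, hi⟩ hadj⟩

end IsCliqueStarOn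

section Embedding

variable {β : Type*} {V : Type} [Fintype V] {H : SimpleGraph β} {ω : ℕ}
  {a : Fin (ω + 1) → ℕ} {w : Fin ω → β} {K : CRG V}

theorem embedsIn_of_le_grayDeg [Finite β] [DecidableEq V] (hblack : ∀ v, K.vWhite v = false)
    (hedges : ∀ u v, u ≠ v → K.ecolor u v ≠ EColor.black) (hw : IsCliqueStarOn H ω a w)
    {v : V} (hv : ω + ∑ i, a i ≤ K.grayDeg v) : EmbedsIn H K := by
  classical
  obtain ⟨f, hf, hf_mem⟩ := exists_injective_mem_of_forall_card_le
    (fun _ : ↥(Set.range w)ᶜ => K.grayNbhd v) fun _ => hw.ncard_compl_range_le.trans hv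
  have hfv : ∀ b, f b ≠ v ∧ K.ecolor v (f b) = EColor.gray :=
    fun b => CRG.mem_grayNbhd.1 (hf_mem b)
  set φ : β → V := fun b => if hb : b ∈ (Set.range w)ᶜ then f ⟨b, hb⟩ else v
  have hφw : ∀ i, φ (w i) = v := fun i => dif_neg (by simp)
  have hφf : ∀ b (hb : b ∈ (Set.range w)ᶜ), φ b = f ⟨b, hb⟩ := fun b hb => dif_pos hb
  refine embedsIn_of_adj_gray_of_not_adj_ne hblack hedges φ (fun x y hxy hne => ?_)
    (fun x y hne hxy => ?_)
  · by_cases hx : x ∈ (Set.range w)ᶜ <;> by_cases hy : y ∈ (Set.range w)ᶜ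
    · exact absurd hxy (hw.not_adj x y hx hy)
    · obtain ⟨j, rfl⟩ := not_not.1 hy
      rw [hφf x hx, hφw, K.ecolor_symm]
      exact (hfv _).2
    · obtain ⟨i, rfl⟩ := not_not.1 hx
      rw [hφf y hy, hφw]
      exact (hfv _).2
    · obtain ⟨i, rfl⟩ := not_not.1 hx
      obtain ⟨j, rfl⟩ := not_not.1 hy
      exact absurd ((hφw i).trans (hφw j).symm) hne
  · by_cases hx : x ∈ (Set.range w)ᶜ <;> by_cases hy : y ∈ (Set.range w)ᶜ
    · rw [hφf x hx, hφf y hy] at hxy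
      exact absurd (congrArg Subtype.val (hf hxy)) hne
    · obtain ⟨j, rfl⟩ := not_not.1 hy
      rw [hφf x hx, hφw] at hxy
      exact absurd hxy (hfv _).1
    · obtain ⟨i, rfl⟩ := not_not.1 hx
      rw [hφf y hy, hφw] at hxy
      exact absurd hxy.symm (hfv _).1
    · obtain ⟨i, rfl⟩ := not_not.1 hx
      obtain ⟨j, rfl⟩ := not_not.1 hy
      exact hw.adj i j fun h => hne (h ▸ rfl)

theorem embedsIn_of_grayClique_of_injOn (hblack : ∀ v, K.vWhite v = false)
    (hedges : ∀ u v, u ≠ v → K.ecolor u v ≠ EColor.black) (hw : IsCliqueStarOn H ω a w)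
    {u : Fin ω → V} (hu : Function.Injective u)
    (hgray : ∀ i j, i ≠ j → K.ecolor (u i) (u j) = EColor.gray)
    {nbr : Fin ω → β} (hnbr : ∀ i, nbr i ∉ Set.range w ∧ H.Adj (w i) (nbr i))
    {φ : β → V} (hφw : ∀ i, φ (w i) = u i) (hφnbr : ∀ i, φ (nbr i) = u i)
    (hφ : Set.InjOn φ ((Set.range w)ᶜ \ Set.range nbr))
    (hφu : ∀ b ∈ (Set.range w)ᶜ \ Set.range nbr, φ b ∉ Set.range u)
    (hφgray : ∀ b ∈ (Set.range w)ᶜ \ Set.range nbr, ∀ i, H.Adj (w i) b →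
      K.ecolor (u i) (φ b) = EColor.gray) :
    EmbedsIn H K := by
  have hcases : ∀ b, b ∈ Set.range w ∨ b ∈ Set.range nbr ∨
      b ∈ (Set.range w)ᶜ \ Set.range nbr := fun b => by
    by_cases b ∈ Set.range w <;> by_cases b ∈ Set.range nbr <;> simp_all
  have hfiber : ∀ x i, φ x = u i → x = w i ∨ x = nbr i := by
    intro x i hx
    rcases hcases x with ⟨j, rfl⟩ | ⟨j, rfl⟩ | hxg
    · rw [hφw, hu.eq_iff] at hx
      exact Or.inl (hx ▸ rfl)
    · rw [hφnbr, hu.eq_iff] at hx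
      exact Or.inr (hx ▸ rfl)
    · exact absurd ⟨i, hx.symm⟩ (hφu x hxg)
  have hadj_w : ∀ i y, H.Adj (w i) y → u i ≠ φ y →
      K.ecolor (u i) (φ y) = EColor.gray := by
    intro i y hadj hne
    rcases hcases y with ⟨j, rfl⟩ | ⟨j, rfl⟩ | hyg
    · rw [hφw] at hne ⊢
      exact hgray i j fun h => hne (h ▸ rfl)
    · obtain rfl := hw.eq_of_adj_of_adj (hnbr j).1 hadj (hnbr j).2
      exact absurd (hφnbr i).symm hne
    · exact hφgray y hyg i hadj
  refine embedsIn_of_adj_gray_of_not_adj_ne hblack hedges φ (fun x y hxy hne => ?_)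
    (fun x y hne hxy => ?_)
  · by_cases hx : x ∈ Set.range w
    · obtain ⟨i, rfl⟩ := hx
      rw [hφw] at hne ⊢
      exact hadj_w i y hxy hne
    by_cases hy : y ∈ Set.range w
    · obtain ⟨j, rfl⟩ := hy
      rw [hφw] at hne ⊢
      rw [K.ecolor_symm]
      exact hadj_w j x hxy.symm hne.symm
    exact absurd hxy (hw.not_adj x y hx hy)
  · rcases hcases x with ⟨i, rfl⟩ | ⟨i, rfl⟩ | hxg
    · rcases hfiber y i (hxy ▸ hφw i) with rfl | rfl
      · exact absurd rfl hne
      · exact (hnbr i).2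
    · rcases hfiber y i (hxy ▸ hφnbr i) with rfl | rfl
      · exact (hnbr i).2.symm
      · exact absurd rfl hne
    rcases hcases y with ⟨j, rfl⟩ | ⟨j, rfl⟩ | hyg
    · exact absurd ⟨j, by rw [hxy, hφw]⟩ (hφu x hxg)
    · exact absurd ⟨j, by rw [hxy, hφnbr]⟩ (hφu x hxg)
    · exact absurd (hφ hxg hyg hxy) hne

theorem exists_injective_gray_of_grayDeg [Finite β] [DecidableEq V] (hω : 2 ≤ ω)
    (hw : IsCliqueStarOn H ω a w) {u : Fin ω → V} (hu : Function.Injective u)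
    {nbr : Fin ω → β} (hnbr : ∀ i, nbr i ∉ Set.range w ∧ H.Adj (w i) (nbr i))
    (i₀ : Fin ω) (hi₀ : a i₀.succ + (ω - 1) ≤ K.grayDeg (u i₀))
    (hdeg : ∀ i ≠ i₀, ∑ j, a j + (ω - 1) ≤ K.grayDeg (u i)) :
    ∃ f : ↥((Set.range w)ᶜ \ Set.range nbr) → V, Function.Injective f ∧ ∀ b,
      f b ∉ Set.range u ∧ ∀ i, H.Adj (w i) b → K.ecolor (u i) (f b) = EColor.gray := by
  classical
  set ι := (Set.range w)ᶜ \ Set.range nbr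
  set U := Finset.univ.image u
  have hU : ∀ j, K.grayDeg (u j) ≤ (K.grayNbhd (u j) \ U).card + (ω - 1) := fun j => by
    simpa [U, Finset.card_image_of_injective _ hu] using
      K.grayDeg_le_card_grayNbhd_sdiff (Finset.mem_image_of_mem u (Finset.mem_univ j))
  let t : ι → Finset V := fun b =>
    (Finset.univ \ U).filter fun z => ∀ i, H.Adj (w i) b → K.ecolor (u i) z = EColor.gray
  have ht : ∀ (b : ι) j, (∀ i, H.Adj (w i) b → i = j) → K.grayNbhd (u j) \ U ⊆ t b := by
    intro b j hb z hz
    obtain ⟨hzN, hzU⟩ := Finset.mem_sdiff.1 hz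
    refine Finset.mem_filter.2 ⟨Finset.mem_sdiff.2 ⟨Finset.mem_univ z, hzU⟩, fun i hi => ?_⟩
    obtain rfl := hb i hi
    exact (CRG.mem_grayNbhd.1 hzN).2
  have hs : {b : ι | H.Adj (w i₀) b}.ncard ≤ (K.grayNbhd (u i₀) \ U).card := by
    show (Subtype.val ⁻¹' {b | H.Adj (w i₀) b} : Set ι).ncard ≤ _
    rw [← Set.ncard_image_of_injective _ Subtype.val_injective, Subtype.image_preimage_coe]
    have := hw.ncard_inter_adj_le (S := ι) Set.sdiff_subset (hnbr i₀)
      fun h => h.2 ⟨i₀, rfl⟩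
    have := hU i₀
    omega
  have hrest : ∀ b ∉ {b : ι | H.Adj (w i₀) b}, Nat.card ι ≤ (t b).card := by
    intro b hb
    obtain ⟨j, hj, hbj⟩ := hw.exists_ne_forall_adj_eq hω b.2.1 hb
    calc Nat.card ι ≤ ∑ j, a j := hw.ncard_compl_range_sdiff_le hnbr
      _ ≤ (K.grayNbhd (u j) \ U).card := by have := hdeg j hj; have := hU j; omega
      _ ≤ (t b).card := Finset.card_le_card (ht b j hbj)
  obtain ⟨f, hf, hft⟩ := exists_injective_mem_of_card_le t {b | H.Adj (w i₀) b}
    (K.grayNbhd (u i₀) \ U) (fun b hb => ht b i₀ fun i hi => hw.eq_of_adj_of_adj b.2.1 hi hb)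
    hs hrest
  exact ⟨f, hf, fun b => by simpa [t, U] using hft b⟩

theorem embedsIn_of_grayClique [Finite β] [DecidableEq V] (hblack : ∀ v, K.vWhite v = false)
    (hedges : ∀ u v, u ≠ v → K.ecolor u v ≠ EColor.black) (hω : 2 ≤ ω)
    (hw : IsCliqueStarOn H ω a w) {u : Fin ω → V} (hu : Function.Injective u)
    (hgray : ∀ i j, i ≠ j → K.ecolor (u i) (u j) = EColor.gray) (i₀ : Fin ω)
    (hi₀ : a i₀.succ + (ω - 1) ≤ K.grayDeg (u i₀))
    (hdeg : ∀ i ≠ i₀, ∑ j, a j + (ω - 1) ≤ K.grayDeg (u i)) : EmbedsIn H K := by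
  classical
  choose nbr hnbr using hw.exists_adj
  set ι := (Set.range w)ᶜ \ Set.range nbr
  obtain ⟨f, hf, hf_mem⟩ := exists_injective_gray_of_grayDeg hω hw hu hnbr i₀ hi₀ hdeg
  obtain ⟨φ, hφw, hφnbr, hφ⟩ := exists_eq_on_range_of_injective hw.injective
    (hw.injective_of_adj hnbr) (fun i => (hnbr i).1) u
    fun b => if hb : b ∈ ι then f ⟨b, hb⟩ else u i₀
  have hφf : ∀ b (hb : b ∈ ι), φ b = f ⟨b, hb⟩ :=
    fun b hb => (hφ b hb).trans (dif_pos hb)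
  refine embedsIn_of_grayClique_of_injOn hblack hedges hw hu hgray hnbr hφw hφnbr
    (fun x hx y hy hxy => ?_) (fun b hb => hφf b hb ▸ (hf_mem _).1)
    (fun b hb => hφf b hb ▸ (hf_mem ⟨b, hb⟩).2)
  rw [hφf x hx, hφf y hy] at hxy
  exact congrArg Subtype.val (hf hxy)

end Embedding

theorem cliqueStar_embeds {β : Type*} {V : Type} [Fintype β] [Fintype V] [DecidableEq V]
    (ω : ℕ) (hω : 2 ≤ ω) (a : Fin (ω + 1) → ℕ)
    (H : SimpleGraph β) (hH : IsCliqueStar H ω a)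
    (α : ℕ) (hα : α = ω + ∑ i, a i)
    (K : CRG V)
    (hblack : ∀ v : V, K.vWhite v = false)
    (hedges : ∀ u v : V, u ≠ v → K.ecolor u v ≠ EColor.black)
    (hyp : (∃ v : V, α ≤ K.grayDeg v) ∨
      (∃ vs : Fin ω → V, Function.Injective vs ∧
        (∀ i j : Fin ω, i ≠ j → K.ecolor (vs i) (vs j) = EColor.gray) ∧
        (∀ i : Fin ω, (i : ℕ) < ω - 1 → α - 1 ≤ K.grayDeg (vs i)) ∧
        (α - ω) / ω + ω - 1 ≤ K.grayDeg (vs ⟨ω - 1, by omega⟩))) :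
    EmbedsIn H K := by
  obtain ⟨w, hw⟩ := hH.exists_isCliqueStarOn
  rcases hyp with ⟨v, hv⟩ | ⟨vs, hvs, hgray, hdeg, hlast⟩
  · exact embedsIn_of_le_grayDeg hblack hedges hw (hα ▸ hv)
  have : NeZero ω := ⟨by omega⟩
  obtain ⟨i₀, hi₀⟩ := exists_card_mul_le_sum fun i : Fin ω => a i.succ
  have hmin : a i₀.succ ≤ (α - ω) / ω := by
    rw [Nat.le_div_iff_mul_le (by omega), hα, Fin.sum_univ_succ]
    simp only [Fintype.card_fin] at hi₀
    rw [Nat.mul_comm]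
    omega
  -- `vs L` has the weakest degree bound, so it hosts the clique vertex with the smallest `a`
  set L : Fin ω := ⟨ω - 1, by omega⟩
  refine embedsIn_of_grayClique hblack hedges hω hw (u := vs ∘ Equiv.swap i₀ L)
    (hvs.comp (Equiv.injective _)) (fun i j hij => hgray _ _ ((Equiv.injective _).ne hij)) i₀
    ?_ fun i hi => ?_
  · simp only [Function.comp_apply, Equiv.swap_apply_left]
    omega
  · have hL : (Equiv.swap i₀ L i : ℕ) ≠ ω - 1 := fun h =>
      hi (Equiv.injective _ ((Fin.ext h).trans (Equiv.swap_apply_left i₀ L).symm))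
    have := hdeg (Equiv.swap i₀ L i) (by have := (Equiv.swap i₀ L i).isLt; omega)
    simp only [Function.comp_apply]
    omega
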